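/- arXiv:2105.12318 — 2 statements merged into one kernel-verified Lean document; each statement's English description precedes it below -/
import Mathlib

section
/- Let 𝒞 be the category whose objects are pairs (n,S) with n ≥ -1 an integer and S ⊆ [n], and whose morphisms (n,S) → (n',S') are order-preserving injections φ:[n]→[n'] with φ(S) ⊆ S' and [n']∖φ([n]) ⊆ S'. Let 𝔠 be the class of morphisms with n' = n. Then: for any φ:(n,S)→(n,S') in 𝔠 and any morphism ψ:(n,S)→(n'',S''), setting T = ψ(S') ∪ S'', the morphisms ψ̃:(n,S')→(n'',T) (with the same underlying map as ψ) and φ̃:(n'',S'')→(n'',T) (with identity underlying map) are well-defined morphisms of 𝒞, φ̃ ∈ 𝔠, and the resulting commutative square is a pushout square in 𝒞. Moreover if ψ ∈ 𝔠 then ψ̃ ∈ 𝔠. -/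
/-- A morphism `(n,S) → (n',S')` of the category `𝒞`: an order-preserving injection
(equivalently, a strictly monotone map) between the finite linearly ordered sets,
carrying `S` into `S'`, and such that every element of `[n']` not in the image lies in `S'`.
Here `Fin m` plays the role of the ordered set `[n] = {0,…,n}` with `m = n + 1` elements
(so `m = 0` corresponds to `n = -1`). -/
structure CHom (m : ℕ) (S : Finset (Fin m)) (m' : ℕ) (S' : Finset (Fin m')) : Type where
  toFun : Fin m → Fin m'
  strictMono : ∀ a b : Fin m, a < b → toFun a < toFun b
  mapS : ∀ i ∈ S, toFun i ∈ S'
  compl : ∀ j : Fin m', (∀ i : Fin m, toFun i ≠ j) → j ∈ S'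

/-- Composition of morphisms of `𝒞`. -/
def CHom.comp {m m' m'' : ℕ} {S : Finset (Fin m)} {S' : Finset (Fin m')}
    {S'' : Finset (Fin m'')} (g : CHom m' S' m'' S'') (f : CHom m S m' S') :
    CHom m S m'' S'' where
  toFun := g.toFun ∘ f.toFun
  strictMono := fun a b hab => g.strictMono _ _ (f.strictMono a b hab)
  mapS := fun i hi => g.mapS _ (f.mapS i hi)
  compl := by
    intro j hj
    by_cases h : ∃ i', g.toFun i' = j
    · obtain ⟨i', hi'⟩ := h
      have hni : ∀ i, f.toFun i ≠ i' := by
        intro i hc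
        exact hj i (by show g.toFun (f.toFun i) = j; rw [hc, hi'])
      exact hi' ▸ g.mapS i' (f.compl i' hni)
    · push_neg at h
      exact g.compl j h

/-- The "closed" morphism `(n,S) → (n,S')` of `𝒞` determined by an inclusion `S ⊆ S'`
(its underlying order-preserving injection is necessarily the identity). -/
def closedHom {m : ℕ} {S S' : Finset (Fin m)} (h : S ⊆ S') : CHom m S m S' where
  toFun := id
  strictMono := fun _ _ hab => hab
  mapS := fun _ hi => h hi
  compl := fun j hj => absurd rfl (hj j)

theorem CHom.ext' {m m' : ℕ} {S : Finset (Fin m)} {S' : Finset (Fin m')}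
    {f g : CHom m S m' S'} (h : f.toFun = g.toFun) : f = g := by
  cases f; cases g; simp_all

/-- Pushout of a closed morphism `φ : (n,S) → (n,S')` (encoded by `hSS' : S ⊆ S'`) along an
arbitrary morphism `ψ : (n,S) → (n'',S'')`: with `T = ψ(S') ∪ S''`, the morphism
`ψ̃ : (n,S') → (n'',T)` (with the same underlying map as `ψ`) and the closed morphism
`φ̃ : (n'',S'') → (n'',T)` (with identity underlying map) are well-defined morphisms of `𝒞`,
the resulting square commutes, and it is a pushout square in `𝒞`.  (That `φ̃` is closed, and
that `ψ̃` is closed whenever `ψ` is, is recorded in the types: these morphisms do not change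
the first coordinate.) -/
theorem pushout_along_closed {m m'' : ℕ} {S S' : Finset (Fin m)} (hSS' : S ⊆ S')
    {S'' : Finset (Fin m'')} (ψ : CHom m S m'' S'') :
    ∃ (ψt : CHom m S' m'' (S'.image ψ.toFun ∪ S''))
      (φt : CHom m'' S'' m'' (S'.image ψ.toFun ∪ S'')),
      ψt.toFun = ψ.toFun ∧
      φt.toFun = id ∧
      ψt.comp (closedHom hSS') = φt.comp ψ ∧
      ∀ (p : ℕ) (U : Finset (Fin p)) (u : CHom m S' p U) (v : CHom m'' S'' p U),
        u.comp (closedHom hSS') = v.comp ψ →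
          ∃! w : CHom m'' (S'.image ψ.toFun ∪ S'') p U,
            w.comp ψt = u ∧ w.comp φt = v := by
  refine ⟨⟨ψ.toFun, ψ.strictMono, ?_, ?_⟩, ⟨id, fun _ _ h => h, ?_, ?_⟩, rfl, rfl, ?_, ?_⟩
  · intro i hi
    exact Finset.mem_union_left _ (Finset.mem_image_of_mem _ hi)
  · intro j hj
    exact Finset.mem_union_right _ (ψ.compl j hj)
  · intro i hi
    exact Finset.mem_union_right _ hi
  · intro j hj
    exact absurd rfl (hj j)
  · exact CHom.ext' rfl
  · intro p U u v huv
    have hfun : u.toFun = v.toFun ∘ ψ.toFun := congrArg CHom.toFun huv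
    refine ⟨⟨v.toFun, v.strictMono, ?_, v.compl⟩, ⟨?_, ?_⟩, ?_⟩
    · intro j hj
      rcases Finset.mem_union.mp hj with h | h
      · rcases Finset.mem_image.mp h with ⟨i, hi, rfl⟩
        have : u.toFun i ∈ U := u.mapS i hi
        rwa [hfun] at this
      · exact v.mapS j h
    · exact CHom.ext' hfun.symm
    · exact CHom.ext' rfl
    · intro w ⟨hw1, hw2⟩
      exact CHom.ext' (funext fun j => congrFun (congrArg CHom.toFun hw2) j)
end

section
/- Let 𝒞 be the category with objects (n,S), S ⊆ [n], and morphisms order-preserving injections φ:[n]→[n'] with φ(S) ⊆ S' and [n']∖φ([n]) ⊆ S', and let 𝔠 denote the 'closed' morphisms (those with n' = n). Define a correspondence from (n,S) to (n',S') to be a triple (T, φ, ψ) with φ:(n',S')→(n',T) in 𝔠 and ψ:(n,S)→(n',T) arbitrary, with composition of correspondences given by pushout of the 𝔠-leg along the other leg. Let m be the correspondence from (1,∅) to (2,∅) with T = (2,{1}), ψ:(1,∅)→(2,{1}) the unique morphism (image {0,2}), and φ:(2,∅)→(2,{1}) the identity underlying map. Then, with respect to the monoidal structure (n₁,S₁)⋆(n₂,S₂)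 = (n₁+n₂, S₁⊎S₂) on these correspondences, both composites (m ⋆ id_{(1,∅)}) ∘ m and (id_{(1,∅)} ⋆ m) ∘ m from (1,∅) to (3,∅) are equal to the correspondence (T'', φ'', ψ'') with T'' = (3,{1,2}), φ'':(3,∅)→(3,{1,2}) the identity underlying map, and ψ'':(1,∅)→(3,{1,2}) the unique morphism with image {0,3}. Hence c¹ = (1,∅) is a coassociative (non-counital) coalgebra object in the correspondence category. -/
/-- A correspondence from `(n,S)` to `(n',S')` in `Corr(𝒞ᵒᵖ)`: a triple `(T, φ, ψ)` with
`φ : (n',S') → (n',T)` a closed morphism (encoded by the inclusion `S' ⊆ T`, since its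
underlying map is necessarily the identity) and `ψ : (n,S) → (n',T)` an arbitrary morphism. -/
structure Corr (m : ℕ) (S : Finset (Fin m)) (m' : ℕ) (S' : Finset (Fin m')) : Type where
  T : Finset (Fin m')
  hT : S' ⊆ T
  ψ : CHom m S m' T

/-- Composition of correspondences, given by pushout of the closed leg along the other leg:
the composite of `(T, φ, ψ) : (n,S) → (n',S')` and `(T', φ', ψ') : (n',S') → (n'',S'')` is
`(ψ'(T) ∪ T', …, ψ̃' ∘ ψ)`. -/
def Corr.comp {m m' m'' : ℕ} {S : Finset (Fin m)} {S' : Finset (Fin m')}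
    {S'' : Finset (Fin m'')} (c₁ : Corr m S m' S') (c₂ : Corr m' S' m'' S'') :
    Corr m S m'' S'' where
  T := c₁.T.image c₂.ψ.toFun ∪ c₂.T
  hT := fun j hj => Finset.mem_union_right _ (c₂.hT hj)
  ψ :=
    { toFun := c₂.ψ.toFun ∘ c₁.ψ.toFun
      strictMono := fun a b hab => c₂.ψ.strictMono _ _ (c₁.ψ.strictMono a b hab)
      mapS := fun i hi =>
        Finset.mem_union_left _ (Finset.mem_image_of_mem c₂.ψ.toFun (c₁.ψ.mapS i hi))
      compl := by
        intro j hj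
        by_cases h : ∃ i', c₂.ψ.toFun i' = j
        · obtain ⟨i', hi'⟩ := h
          have hni : ∀ i, c₁.ψ.toFun i ≠ i' := by
            intro i hc
            exact hj i (by show c₂.ψ.toFun (c₁.ψ.toFun i) = j; rw [hc, hi'])
          exact Finset.mem_union_left _
            (hi' ▸ Finset.mem_image_of_mem c₂.ψ.toFun (c₁.ψ.compl i' hni))
        · push_neg at h
          exact Finset.mem_union_right _ (c₂.ψ.compl j h) }

/-- The comultiplication correspondence `m : c¹ = (1,∅) → (2,∅) = c¹ ⋆ c¹`, with
`T = (2,{1})`, `ψ : (1,∅) → (2,{1})` the unique morphism (image `{0,2}`), and closed leg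
`φ : (2,∅) → (2,{1})` with identity underlying map.  (Here the object `(n,S)` is realized
as `(Fin (n+1), S)`.) -/
def comult : Corr 2 (∅ : Finset (Fin 2)) 3 (∅ : Finset (Fin 3)) where
  T := {1}
  hT := by decide
  ψ := { toFun := ![0, 2], strictMono := by decide, mapS := by decide, compl := by decide }

/-- The correspondence `m ⋆ id_{(1,∅)} : (2,∅) → (3,∅)` (monoidal product of `comult` with
the identity correspondence of `(1,∅)`, computed explicitly: `T = {1} ⊎ ∅ = {1}` and
`ψ = ψ_m ⋆ id`, i.e. `0 ↦ 0, 1 ↦ 2, 2 ↦ 3`). -/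
def comultStarId : Corr 3 (∅ : Finset (Fin 3)) 4 (∅ : Finset (Fin 4)) where
  T := {1}
  hT := by decide
  ψ := { toFun := ![0, 2, 3], strictMono := by decide, mapS := by decide, compl := by decide }

/-- The correspondence `id_{(1,∅)} ⋆ m : (2,∅) → (3,∅)` (computed explicitly:
`T = ∅ ⊎ {1} = {2}` and `ψ = id ⋆ ψ_m`, i.e. `0 ↦ 0, 1 ↦ 1, 2 ↦ 3`). -/
def idStarComult : Corr 3 (∅ : Finset (Fin 3)) 4 (∅ : Finset (Fin 4)) where
  T := {2}
  hT := by decide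
  ψ := { toFun := ![0, 1, 3], strictMono := by decide, mapS := by decide, compl := by decide }

/-- The common value of the two iterated comultiplications: the correspondence
`(1,∅) → (3,∅)` with `T'' = (3,{1,2})`, closed leg with identity underlying map, and
`ψ'' : (1,∅) → (3,{1,2})` the unique morphism with image `{0,3}`. -/
def doubleComult : Corr 2 (∅ : Finset (Fin 2)) 4 (∅ : Finset (Fin 4)) where
  T := {1, 2}
  hT := by decide
  ψ := { toFun := ![0, 3], strictMono := by decide, mapS := by decide, compl := by decide }

lemma corr_ext {m m' : ℕ} {S : Finset (Fin m)} {S' : Finset (Fin m')}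
    (c d : Corr m S m' S') (hT : c.T = d.T) (hf : c.ψ.toFun = d.ψ.toFun) : c = d := by
  obtain ⟨T, hT1, f, _, _, _⟩ := c
  obtain ⟨T', hT1', f', _, _, _⟩ := d
  cases hT; cases hf; rfl

/-- Coassociativity: both composites `(m ⋆ id) ∘ m` and `(id ⋆ m) ∘ m` from `(1,∅)` to
`(3,∅)` equal the correspondence `doubleComult`; hence `c¹ = (1,∅)` is a coassociative
(non-counital) coalgebra object in the correspondence category of `𝒞ᵒᵖ`. -/
theorem comult_coassociative :
    Corr.comp comult comultStarId = doubleComult ∧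
    Corr.comp comult idStarComult = doubleComult := by
  constructor <;> (apply corr_ext <;> [decide; (funext i; fin_cases i <;> rfl)])
end
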